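/- Fix c ∈ [0,1] with k(c) > 0. Then for every x > β*(c), (1/2)σ² u″(x; c) + θ(μ − x) u′(x; c) − λ u(x; c) = θμ − k(c)x, while for every x < β*(c) this expression equals 0; consequently, for every x ∈ ℝ with x ≠ β*(c), (1/2)σ² u″(x; c) + θ(μ − x) u′(x; c) − λ u(x; c) ≤ θμ − k(c)x. -/

import Mathlib

/-!
Write `ψ_p(b) = ∫₀^∞ t^p e^{-t²/2 - bt} dt`, so that `φ(x) = ψ_{λ/θ-1}(a(x - μ))`. Differentiating
under the integral sign gives `ψ_p' = -ψ_{p+1}`, and integrating by parts gives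
`ψ_{p+1}(b) + b ψ_p(b) = p ψ_{p-1}(b)`; together with `σ²a²/2 = θ` these say exactly that the
generator `L f = ½σ² f'' + θ(μ - x) f' - λ f` annihilates `φ`. On `(β, ∞)` the function `u` is
`G - Cφ` with `G` affine, so `L u = L G = θμ - k x` there; on `(-∞, β)` it vanishes, so `L u = 0`,
which is at most `θμ - k x` because `x < β < θμ/k`.
-/

open MeasureTheory Real Set Filter

/-- The (positive multiple of the) strictly decreasing fundamental solution `φ_λ` of the
Ornstein–Uhlenbeck equation `(1/2)σ² f'' + θ(μ - x) f' = λ f`, written as the integral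
`φ(x) = ∫₀^∞ t^(λ/θ - 1) exp(-t²/2 - a t (x - μ)) dt` with `a = √(2θ)/σ`. -/
noncomputable def OUphi (lam th mu sig : ℝ) (x : ℝ) : ℝ :=
  ∫ t in Set.Ioi (0:ℝ),
    t ^ (lam / th - 1) * Real.exp (-t ^ 2 / 2 - Real.sqrt (2 * th) / sig * t * (x - mu))

/-- `k(c) = λ + θ + λ Φ'(c)`. -/
noncomputable def kfun (lam th : ℝ) (Phi : ℝ → ℝ) (c : ℝ) : ℝ :=
  lam + th + lam * deriv Phi c

/-- `G(x; c) = μ(k(c) - θ)/λ + k(c)(x - μ)/(λ + θ)`. -/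
noncomputable def Gfun (lam th mu : ℝ) (Phi : ℝ → ℝ) (x c : ℝ) : ℝ :=
  mu * (kfun lam th Phi c - th) / lam + kfun lam th Phi c * (x - mu) / (lam + th)

/-- `x₀(c) = -θμΦ'(c)/k(c)`. -/
noncomputable def x0fun (lam th mu : ℝ) (Phi : ℝ → ℝ) (c : ℝ) : ℝ :=
  -(th * mu * deriv Phi c) / kfun lam th Phi c

/-- The smooth-fit function `H(x;c) = (k(c)/(λ+θ)) φ(x) - G(x;c) φ'(x)`. -/
noncomputable def Hfun (lam th mu sig : ℝ) (Phi : ℝ → ℝ) (x c : ℝ) : ℝ :=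
  kfun lam th Phi c / (lam + th) * OUphi lam th mu sig x
    - Gfun lam th mu Phi x c * deriv (OUphi lam th mu sig) x

/-- The candidate value function of the optimal stopping problem:
`u(x;c) = G(x;c) - (G(β;c)/φ(β)) φ(x)` for `x > β` and `u(x;c) = 0` for `x ≤ β`. -/
noncomputable def ufun (lam th mu sig : ℝ) (Phi : ℝ → ℝ) (b : ℝ) (x c : ℝ) : ℝ :=
  if b < x then
    Gfun lam th mu Phi x c
      - Gfun lam th mu Phi b c / OUphi lam th mu sig b * OUphi lam th mu sig x
  else 0

open scoped Topology

noncomputable def gaussMoment (p b : ℝ) : ℝ :=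
  ∫ t in Ioi (0:ℝ), t ^ p * exp (-t ^ 2 / 2 - b * t)

lemma aestronglyMeasurable_gaussMoment_integrand (p b : ℝ) :
    AEStronglyMeasurable (fun t : ℝ => t ^ p * exp (-t ^ 2 / 2 - b * t))
      (volume.restrict (Ioi 0)) :=
  ContinuousOn.aestronglyMeasurable
    ((continuousOn_id.rpow_const fun _ ht => Or.inl (ne_of_gt ht)).mul
      (by fun_prop)) measurableSet_Ioi

lemma integrableOn_gaussMoment_integrand {p : ℝ} (hp : -1 < p) (b : ℝ) :
    IntegrableOn (fun t : ℝ => t ^ p * exp (-t ^ 2 / 2 - b * t)) (Ioi 0) := by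
  refine ((integrableOn_rpow_mul_exp_neg_mul_sq (by norm_num : (0:ℝ) < 4⁻¹) hp).const_mul
    (exp (b ^ 2))).mono' (aestronglyMeasurable_gaussMoment_integrand p b) ?_
  filter_upwards [ae_restrict_mem measurableSet_Ioi] with t (ht : 0 < t)
  rw [norm_of_nonneg (by positivity), mul_left_comm, ← exp_add]
  gcongr
  nlinarith [sq_nonneg (t / 2 + b)]

lemma hasDerivAt_gaussMoment {p : ℝ} (hp : -1 < p) (b : ℝ) :
    HasDerivAt (gaussMoment p) (-gaussMoment (p + 1) b) b := by
  -- for `|b' - b| < 1` the exponent is at most `(|b| + 1)² - t²/4`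
  have hdom := hasDerivAt_integral_of_dominated_loc_of_deriv_le
    (F := fun b t => t ^ p * exp (-t ^ 2 / 2 - b * t))
    (F' := fun b t => -(t ^ (p + 1) * exp (-t ^ 2 / 2 - b * t)))
    (bound := fun t => exp ((|b| + 1) ^ 2) * (t ^ (p + 1) * exp (-4⁻¹ * t ^ 2)))
    (Metric.ball_mem_nhds b one_pos)
    (Eventually.of_forall fun b' => aestronglyMeasurable_gaussMoment_integrand p b')
    (integrableOn_gaussMoment_integrand hp b)
    (aestronglyMeasurable_gaussMoment_integrand (p + 1) b).neg ?bound
    ((integrableOn_rpow_mul_exp_neg_mul_sq (by norm_num) (by linarith)).const_mul _) ?deriv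
  · have hderiv := hdom.2
    rw [integral_neg] at hderiv
    exact hderiv
  case bound =>
    filter_upwards [ae_restrict_mem measurableSet_Ioi] with t (ht : 0 < t) b' hb'
    have hb'b : -(|b| + 1) ≤ b' := by
      have := (abs_lt.mp (mem_ball_iff_norm.mp hb')).1
      linarith [neg_abs_le b]
    rw [norm_neg, norm_of_nonneg (by positivity), mul_left_comm, ← exp_add]
    gcongr
    nlinarith [sq_nonneg (|b| + 1 - t / 2)]
  case deriv =>
    filter_upwards [ae_restrict_mem measurableSet_Ioi] with t (ht : 0 < t) b' _
    have hexp : HasDerivAt (fun b : ℝ => -t ^ 2 / 2 - b * t) (-t) b' := by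
      simpa using (hasDerivAt_mul_const t).const_sub (-t ^ 2 / 2)
    refine (hexp.exp.const_mul (t ^ p)).congr_deriv ?_
    rw [rpow_add_one (ne_of_gt ht)]
    ring

lemma tendsto_gaussMoment_integrand_atTop (p b : ℝ) :
    Tendsto (fun t : ℝ => t ^ p * exp (-t ^ 2 / 2 - b * t)) atTop (𝓝 0) := by
  refine squeeze_zero' ?_ ?_ (tendsto_rpow_mul_exp_neg_mul_atTop_nhds_zero p 1 one_pos)
  · filter_upwards [eventually_gt_atTop 0] with t ht
    positivity
  · filter_upwards [eventually_gt_atTop 0, eventually_ge_atTop (2 * (1 - b))] with t ht htb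
    gcongr
    nlinarith

lemma gaussMoment_add_one_add_mul {p : ℝ} (hp : 0 < p) (b : ℝ) :
    gaussMoment (p + 1) b + b * gaussMoment p b = p * gaussMoment (p - 1) b := by
  set E : ℝ → ℝ := fun t => exp (-t ^ 2 / 2 - b * t)
  have hI_succ : IntegrableOn (fun t => t ^ (p + 1) * E t) (Ioi 0) :=
    integrableOn_gaussMoment_integrand (by linarith) b
  have hI : IntegrableOn (fun t => b * (t ^ p * E t)) (Ioi 0) :=
    (integrableOn_gaussMoment_integrand (by linarith) b).const_mul b
  have hI_pred : IntegrableOn (fun t => p * (t ^ (p - 1) * E t)) (Ioi 0) :=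
    (integrableOn_gaussMoment_integrand (by linarith) b).const_mul p
  have hI_succ_add : IntegrableOn (fun t => t ^ (p + 1) * E t + b * (t ^ p * E t)) (Ioi 0) :=
    hI_succ.add hI
  have ibp := integral_Ioi_of_hasDerivAt_of_tendsto
    (f := fun t => -(t ^ p * E t))
    (f' := fun t => t ^ (p + 1) * E t + b * (t ^ p * E t) - p * (t ^ (p - 1) * E t))
    (m := 0) ?cont ?deriv (hI_succ_add.sub hI_pred)
    (by simpa using (tendsto_gaussMoment_integrand_atTop p b).neg)
  · rw [integral_sub hI_succ_add hI_pred, integral_add hI_succ hI, integral_const_mul,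
      integral_const_mul, zero_rpow (ne_of_gt hp), zero_mul, neg_zero, sub_zero] at ibp
    exact sub_eq_zero.mp ibp
  case cont =>
    exact (((continuousAt_rpow_const 0 p (Or.inr hp.le)).mul
      (by fun_prop)).neg).continuousWithinAt
  case deriv =>
    intro t (ht : 0 < t)
    have hexp : HasDerivAt (fun t : ℝ => -t ^ 2 / 2 - b * t) (-t - b) t := by
      refine (((hasDerivAt_pow 2 t).neg.div_const 2).sub
        ((hasDerivAt_id t).const_mul b)).congr_deriv ?_
      ring
    refine ((hasDerivAt_rpow_const (Or.inl (ne_of_gt ht))).mul hexp.exp).neg.congr_deriv ?_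
    rw [rpow_add_one (ne_of_gt ht)]
    ring

lemma hasDerivAt_gaussMoment_comp_affine {p : ℝ} (hp : -1 < p) (a m x : ℝ) :
    HasDerivAt (fun y => gaussMoment p (a * (y - m)))
      (-(a * gaussMoment (p + 1) (a * (x - m)))) x :=
  ((hasDerivAt_gaussMoment hp _).comp x (((hasDerivAt_id' x).sub_const m).const_mul a)).congr_deriv
    (by ring)

noncomputable def ouGenerator (lam th mu sig : ℝ) (f : ℝ → ℝ) (x : ℝ) : ℝ :=
  1 / 2 * sig ^ 2 * deriv (deriv f) x + th * (mu - x) * deriv f x - lam * f x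

section ouGenerator

variable {lam th mu sig : ℝ}

lemma ouGenerator_congr {f g : ℝ → ℝ} {x : ℝ} (h : f =ᶠ[𝓝 x] g) :
    ouGenerator lam th mu sig f x = ouGenerator lam th mu sig g x := by
  rw [ouGenerator, ouGenerator, h.deriv.deriv_eq, h.deriv_eq, h.eq_of_nhds]

lemma ouGenerator_zero (x : ℝ) : ouGenerator lam th mu sig (fun _ => 0) x = 0 := by
  simp [ouGenerator]

lemma ouGenerator_sub_const_mul {f g : ℝ → ℝ} (hf : Differentiable ℝ f)
    (hf' : Differentiable ℝ (deriv f)) (hg : Differentiable ℝ g)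
    (hg' : Differentiable ℝ (deriv g)) (C x : ℝ) :
    ouGenerator lam th mu sig (fun y => f y - C * g y) x
      = ouGenerator lam th mu sig f x - C * ouGenerator lam th mu sig g x := by
  have hd : deriv (fun y => f y - C * g y) = fun y => deriv f y - C * deriv g y :=
    funext fun y => by rw [deriv_fun_sub (hf y) ((hg y).const_mul C), deriv_const_mul C (hg y)]
  rw [ouGenerator, ouGenerator, ouGenerator, hd, deriv_fun_sub (hf' x) ((hg' x).const_mul C),
    deriv_const_mul C (hg' x)]
  ring

lemma OUphi_eq_gaussMoment (x : ℝ) :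
    OUphi lam th mu sig x = gaussMoment (lam / th - 1) (√(2 * th) / sig * (x - mu)) := by
  simp only [OUphi, gaussMoment, mul_right_comm _ _ (x - mu)]

lemma hasDerivAt_OUphi (hp : 0 < lam / th) (x : ℝ) :
    HasDerivAt (OUphi lam th mu sig)
      (-(√(2 * th) / sig * gaussMoment (lam / th) (√(2 * th) / sig * (x - mu)))) x := by
  have hψ := hasDerivAt_gaussMoment_comp_affine (p := lam / th - 1) (by linarith)
    (√(2 * th) / sig) mu x
  rwa [sub_add_cancel, ← funext OUphi_eq_gaussMoment] at hψ

lemma deriv_OUphi (hp : 0 < lam / th) :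
    deriv (OUphi lam th mu sig)
      = fun x => -(√(2 * th) / sig * gaussMoment (lam / th) (√(2 * th) / sig * (x - mu))) :=
  funext fun x => (hasDerivAt_OUphi hp x).deriv

lemma hasDerivAt_deriv_OUphi (hp : 0 < lam / th) (x : ℝ) :
    HasDerivAt (deriv (OUphi lam th mu sig))
      ((√(2 * th) / sig) ^ 2 * gaussMoment (lam / th + 1) (√(2 * th) / sig * (x - mu))) x := by
  rw [deriv_OUphi hp]
  have hψ := hasDerivAt_gaussMoment_comp_affine (p := lam / th) (by linarith)
    (√(2 * th) / sig) mu x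
  exact (hψ.const_mul _).neg.congr_deriv (by ring)

lemma ouGenerator_OUphi (hth : 0 < th) (hp : 0 < lam / th) (hsig : sig ≠ 0) (x : ℝ) :
    ouGenerator lam th mu sig (OUphi lam th mu sig) x = 0 := by
  set a := √(2 * th) / sig
  have ha : 1 / 2 * sig ^ 2 * a ^ 2 = th := by
    rw [div_pow, sq_sqrt (by positivity)]
    field_simp
  have ibp := gaussMoment_add_one_add_mul hp (a * (x - mu))
  rw [ouGenerator, (hasDerivAt_deriv_OUphi hp x).deriv, deriv_OUphi hp, OUphi_eq_gaussMoment]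
  linear_combination th * ibp + gaussMoment (lam / th + 1) (a * (x - mu)) * ha
    + gaussMoment (lam / th - 1) (a * (x - mu)) * mul_div_cancel₀ lam hth.ne'

lemma hasDerivAt_Gfun (Phi : ℝ → ℝ) (x c : ℝ) :
    HasDerivAt (fun x => Gfun lam th mu Phi x c) (kfun lam th Phi c / (lam + th)) x :=
  (((((hasDerivAt_id x).sub_const mu).const_mul _).div_const _).const_add _).congr_deriv
    (by rw [mul_one])

lemma deriv_Gfun (Phi : ℝ → ℝ) (c : ℝ) :
    deriv (fun x => Gfun lam th mu Phi x c) = fun _ => kfun lam th Phi c / (lam + th) :=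
  funext fun x => (hasDerivAt_Gfun Phi x c).deriv

lemma ouGenerator_Gfun (hlam : lam ≠ 0) (hlt : lam + th ≠ 0) (Phi : ℝ → ℝ) (x c : ℝ) :
    ouGenerator lam th mu sig (fun x => Gfun lam th mu Phi x c) x
      = th * mu - kfun lam th Phi c * x := by
  rw [ouGenerator, deriv_Gfun, deriv_const, Gfun]
  field_simp
  ring

end ouGenerator

theorem statement9_general (lam th mu sig : ℝ)
    (hlam : 0 < lam) (hth : 0 < th) (hsig : 0 < sig)
    (Phi : ℝ → ℝ)
    (c : ℝ) (hk : 0 < kfun lam th Phi c)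
    (beta : ℝ)
    (hbetahat : beta < th * mu / kfun lam th Phi c) :
    (∀ x : ℝ, beta < x →
      1 / 2 * sig ^ 2 * deriv (deriv (fun x => ufun lam th mu sig Phi beta x c)) x
        + th * (mu - x) * deriv (fun x => ufun lam th mu sig Phi beta x c) x
        - lam * ufun lam th mu sig Phi beta x c
      = th * mu - kfun lam th Phi c * x) ∧
    (∀ x : ℝ, x < beta →
      1 / 2 * sig ^ 2 * deriv (deriv (fun x => ufun lam th mu sig Phi beta x c)) x
        + th * (mu - x) * deriv (fun x => ufun lam th mu sig Phi beta x c) x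
        - lam * ufun lam th mu sig Phi beta x c
      = 0) ∧
    (∀ x : ℝ, x ≠ beta →
      1 / 2 * sig ^ 2 * deriv (deriv (fun x => ufun lam th mu sig Phi beta x c)) x
        + th * (mu - x) * deriv (fun x => ufun lam th mu sig Phi beta x c) x
        - lam * ufun lam th mu sig Phi beta x c
      ≤ th * mu - kfun lam th Phi c * x) := by
  have hp : 0 < lam / th := div_pos hlam hth
  set u := fun x => ufun lam th mu sig Phi beta x c
  set C := Gfun lam th mu Phi beta c / OUphi lam th mu sig beta
  have above (x : ℝ) (hx : beta < x) :
      ouGenerator lam th mu sig u x = th * mu - kfun lam th Phi c * x := by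
    have hu : u =ᶠ[𝓝 x] fun y => Gfun lam th mu Phi y c - C * OUphi lam th mu sig y :=
      (eventually_gt_nhds hx).mono fun y hy => if_pos hy
    rw [ouGenerator_congr hu,
      ouGenerator_sub_const_mul (fun y => (hasDerivAt_Gfun Phi y c).differentiableAt)
        (by rw [deriv_Gfun]; exact differentiable_const _)
        (fun y => (hasDerivAt_OUphi hp y).differentiableAt)
        (fun y => (hasDerivAt_deriv_OUphi hp y).differentiableAt),
      ouGenerator_Gfun hlam.ne' (by positivity), ouGenerator_OUphi hth hp hsig.ne', mul_zero,
      sub_zero]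
  have below (x : ℝ) (hx : x < beta) : ouGenerator lam th mu sig u x = 0 := by
    have hu : u =ᶠ[𝓝 x] fun _ => 0 := (eventually_lt_nhds hx).mono fun y hy => if_neg hy.le.not_gt
    rw [ouGenerator_congr hu, ouGenerator_zero]
  refine ⟨above, below, fun x hx => ?_⟩
  rcases hx.lt_or_gt with hx | hx
  · have hkx : kfun lam th Phi c * x < th * mu := calc
      kfun lam th Phi c * x < kfun lam th Phi c * beta := mul_lt_mul_of_pos_left hx hk
      _ < th * mu := (lt_div_iff₀' hk).mp hbetahat
    exact (below x hx).trans_le (sub_nonneg.mpr hkx.le)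
  · exact (above x hx).le

/-- fix `c ∈ [0,1]` with `k(c) > 0` and let `β = β*(c)` be the unique zero
of `H(·;c)` (with `β < x₀(c)` and `β < θμ/k(c)`). Then for `x > β`,
`(1/2)σ² u'' + θ(μ-x) u' - λ u = θμ - k(c)x`, for `x < β` this expression is `0`, and
consequently it is `≤ θμ - k(c)x` for every `x ≠ β`. -/
theorem statement9 (lam th mu sig : ℝ)
    (hlam : 0 < lam) (hth : 0 < th) (hmu : 0 < mu) (hsig : 0 < sig)
    (Phi : ℝ → ℝ) (hPhiC2 : ContDiff ℝ 2 Phi)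
    (hPhiconv : StrictConvexOn ℝ Set.univ Phi)
    (hPhi' : ∀ c ∈ Set.Icc (0:ℝ) 1, deriv Phi c < 0) (hPhi1 : Phi 1 = 0)
    (c : ℝ) (hc : c ∈ Set.Icc (0:ℝ) 1) (hk : 0 < kfun lam th Phi c)
    (beta : ℝ)
    (hbeta0 : Hfun lam th mu sig Phi beta c = 0)
    (hbetau : ∀ y : ℝ, Hfun lam th mu sig Phi y c = 0 → y = beta)
    (hbetax0 : beta < x0fun lam th mu Phi c)
    (hbetahat : beta < th * mu / kfun lam th Phi c) :
    (∀ x : ℝ, beta < x →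
      1 / 2 * sig ^ 2 * deriv (deriv (fun x => ufun lam th mu sig Phi beta x c)) x
        + th * (mu - x) * deriv (fun x => ufun lam th mu sig Phi beta x c) x
        - lam * ufun lam th mu sig Phi beta x c
      = th * mu - kfun lam th Phi c * x) ∧
    (∀ x : ℝ, x < beta →
      1 / 2 * sig ^ 2 * deriv (deriv (fun x => ufun lam th mu sig Phi beta x c)) x
        + th * (mu - x) * deriv (fun x => ufun lam th mu sig Phi beta x c) x
        - lam * ufun lam th mu sig Phi beta x c
      = 0) ∧
    (∀ x : ℝ, x ≠ beta →
      1 / 2 * sig ^ 2 * deriv (deriv (fun x => ufun lam th mu sig Phi beta x c)) x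
        + th * (mu - x) * deriv (fun x => ufun lam th mu sig Phi beta x c) x
        - lam * ufun lam th mu sig Phi beta x c
      ≤ th * mu - kfun lam th Phi c * x) :=
  statement9_general lam th mu sig hlam hth hsig Phi c hk beta hbetahat
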